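/- Let N be a positive integer, A an N×N real skew-symmetric matrix, c ∈ ℝ^N and ε ∈ ℝ. For x ∈ ℝ^N let M(x) = 𝟙 − ε·A·diag(x) and φ(x) = det M(x), and on the open set where φ(x) ≠ 0 define the Kahan map f(x) = M(x)⁻¹ (x + ε c). Then for every x with φ(x) ≠ 0 and φ(f(x)) ≠ 0, f is differentiable at x and the determinant of its derivative satisfies det(Df(x)) = φ(f(x)) / φ(x); equivalently, the volume form dx₁∧…∧dx_N / φ(x) is invariant under f. Moreover, for skew-symmetric A one has det(𝟙 − ε·A·diag(x)) = det(𝟙 + ε·A·diag(x)) for all x and ε, so φ is an even polynomial in ε. -/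

import Mathlib

open Matrix

/-- The matrix `𝟙 - ε·A·diag(x)` of the Kahan discretization
`x̃ᵢ - xᵢ = ε ∑ⱼ aᵢⱼ xⱼ x̃ⱼ + ε cᵢ`. -/
noncomputable def kahanM (N : ℕ) (A : Matrix (Fin N) (Fin N) ℝ) (ε : ℝ)
    (x : Fin N → ℝ) : Matrix (Fin N) (Fin N) ℝ :=
  1 - ε • (A * Matrix.diagonal x)

/-- `φ(x) = det(𝟙 - ε·A·diag(x))`. -/
noncomputable def kahanPhi (N : ℕ) (A : Matrix (Fin N) (Fin N) ℝ) (ε : ℝ)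
    (x : Fin N → ℝ) : ℝ :=
  (kahanM N A ε x).det

/-- The Kahan map `f(x) = (𝟙 - ε·A·diag(x))⁻¹ (x + ε c)`. -/
noncomputable def kahanF (N : ℕ) (A : Matrix (Fin N) (Fin N) ℝ) (c : Fin N → ℝ)
    (ε : ℝ) (x : Fin N → ℝ) : Fin N → ℝ :=
  (kahanM N A ε x)⁻¹ *ᵥ (x + ε • c)

/-!
Differentiating `M(x) f(x) = x + ε c` gives `M(x) Df(x) dx - ε A diag(dx) f(x) = dx`, and since
`diag(dx) f(x) = diag(f(x)) dx` this says `Df(x) = M(x)⁻¹ (𝟙 + ε A diag(f(x)))`. Transposing, and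
using `det (𝟙 + P Q) = det (𝟙 + Q P)`, skew-symmetry of `A` turns `det (𝟙 + ε A diag(y))` into
`det (𝟙 - ε A diag(y)) = φ(y)`.
-/

theorem Matrix.det_one_sub_mul_eq_det_one_add_mul {n R : Type*} [Fintype n] [DecidableEq n]
    [CommRing R] {A B : Matrix n n R} (hA : Aᵀ = -A) (hB : Bᵀ = B) :
    (1 - A * B).det = (1 + A * B).det := by
  rw [← det_transpose, transpose_sub, transpose_mul, hA, hB, transpose_one, Matrix.mul_neg,
    sub_neg_eq_add, det_one_add_mul_comm]

theorem Matrix.det_one_sub_smul_mul_diagonal_eq_det_one_add {n R : Type*} [Fintype n]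
    [DecidableEq n] [CommRing R] {A : Matrix n n R} (hA : Aᵀ = -A) (x : n → R) (ε : R) :
    (1 - ε • (A * diagonal x)).det = (1 + ε • (A * diagonal x)).det := by
  rw [← smul_mul_assoc]
  exact det_one_sub_mul_eq_det_one_add_mul (by rw [transpose_smul, hA, smul_neg])
    (diagonal_transpose x)

theorem Matrix.diagonal_mulVec_comm {n R : Type*} [Fintype n] [DecidableEq n] [CommSemiring R]
    (u w : n → R) : diagonal u *ᵥ w = diagonal w *ᵥ u := by
  ext i
  simp only [mulVec_diagonal, mul_comm]

-- Any norm on matrices would do: none of them enters the statement of the theorem.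
attribute [local instance] Matrix.linftyOpNormedRing Matrix.linftyOpNormedAlgebra

section

variable {𝕜 E n : Type*} [RCLike 𝕜] [NormedAddCommGroup E] [NormedSpace 𝕜 E] [Fintype n]
  [DecidableEq n]

-- `hL` is the product rule applied to `M z *ᵥ ((M z)⁻¹ *ᵥ v z) = v z`.
theorem HasFDerivAt.inv_mulVec {M : E → Matrix n n 𝕜} {M' : E →L[𝕜] Matrix n n 𝕜}
    {v : E → n → 𝕜} {v' L : E →L[𝕜] n → 𝕜} {x : E}
    (hM : HasFDerivAt M M' x) (hv : HasFDerivAt v v' x) (hdet : IsUnit (M x).det)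
    (hL : ∀ dx, M x *ᵥ L dx + M' dx *ᵥ ((M x)⁻¹ *ᵥ v x) = v' dx) :
    HasFDerivAt (fun z => (M z)⁻¹ *ᵥ v z) L x := by
  obtain ⟨u, hu⟩ := (isUnit_iff_isUnit_det _).mpr hdet
  have hMinv : (M x)⁻¹ = ↑u⁻¹ := by rw [← hu, nonsing_inv_eq_ringInverse, Ring.inverse_unit]
  have hinv : HasFDerivAt (fun z => (M z)⁻¹)
      ((-ContinuousLinearMap.mulLeftRight 𝕜 _ ↑u⁻¹ ↑u⁻¹) ∘L M') x := by
    simp_rw [nonsing_inv_eq_ringInverse]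
    exact (hu ▸ hasFDerivAt_ringInverse (𝕜 := 𝕜) u).comp x hM
  rw [← hMinv] at hinv
  let mulVecCLM : Matrix n n 𝕜 →L[𝕜] (n → 𝕜) →L[𝕜] n → 𝕜 := LinearMap.toContinuousLinearMap
    (LinearMap.toContinuousLinearMap.toLinearMap ∘ₗ Matrix.toLin'.toLinearMap)
  refine ((mulVecCLM.hasFDerivAt.comp x hinv).clm_apply hv).congr_fderiv
    (ContinuousLinearMap.ext fun dx => ?_)
  change (M x)⁻¹ *ᵥ v' dx + (-((M x)⁻¹ * M' dx * (M x)⁻¹)) *ᵥ v x = L dx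
  rw [← hL dx, mulVec_add, mulVec_mulVec, nonsing_inv_mul _ hdet, one_mulVec, neg_mulVec,
    ← mulVec_mulVec, ← mulVec_mulVec]
  abel

end

section Kahan

variable {N : ℕ} (A : Matrix (Fin N) (Fin N) ℝ) (c : Fin N → ℝ) (ε : ℝ)

theorem hasFDerivAt_kahanM (x : Fin N → ℝ) :
    HasFDerivAt (kahanM N A ε)
      (-LinearMap.toContinuousLinearMap (LinearMap.mulLeft ℝ (ε • A) ∘ₗ diagonalLinearMap _ ℝ ℝ))
      x := by
  refine ((ContinuousLinearMap.hasFDerivAt _).const_sub 1).congr_of_eventuallyEq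
    (Filter.Eventually.of_forall fun z => ?_)
  change 1 - ε • (A * diagonal z) = 1 - ε • A * diagonal z
  rw [smul_mul_assoc]

theorem hasFDerivAt_kahanF {x : Fin N → ℝ} (hx : kahanPhi N A ε x ≠ 0) :
    HasFDerivAt (kahanF N A c ε) (LinearMap.toContinuousLinearMap (toLin'
      ((kahanM N A ε x)⁻¹ * (1 + ε • (A * diagonal (kahanF N A c ε x)))))) x := by
  refine (hasFDerivAt_kahanM A ε x).inv_mulVec ((hasFDerivAt_id x).add_const (ε • c))
    hx.isUnit fun dx => ?_
  change kahanM N A ε x *ᵥ (_ *ᵥ dx) + (-((ε • A) * diagonal dx)) *ᵥ kahanF N A c ε x = dx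
  rw [mulVec_mulVec, ← Matrix.mul_assoc, mul_nonsing_inv _ hx.isUnit, Matrix.one_mul, neg_mulVec,
    ← mulVec_mulVec, diagonal_mulVec_comm, mulVec_mulVec, add_mulVec, one_mulVec, smul_mul_assoc]
  abel

end Kahan

theorem kahan_skew_invariant_measure (N : ℕ)
    (A : Matrix (Fin N) (Fin N) ℝ) (hA : Aᵀ = -A) (c : Fin N → ℝ) (ε : ℝ) :
    (∀ x : Fin N → ℝ, kahanPhi N A ε x ≠ 0 →
      kahanPhi N A ε (kahanF N A c ε x) ≠ 0 →
      DifferentiableAt ℝ (kahanF N A c ε) x ∧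
        (fderiv ℝ (kahanF N A c ε) x).det
          = kahanPhi N A ε (kahanF N A c ε x) / kahanPhi N A ε x) ∧
    (∀ (x : Fin N → ℝ) (ε' : ℝ),
      (1 - ε' • (A * Matrix.diagonal x)).det
        = (1 + ε' • (A * Matrix.diagonal x)).det) := by
  refine ⟨fun x hx _ => ?_, det_one_sub_smul_mul_diagonal_eq_det_one_add hA⟩
  have hf := hasFDerivAt_kahanF A c ε hx
  refine ⟨hf.differentiableAt, ?_⟩
  rw [hf.fderiv, LinearMap.det_toContinuousLinearMap, LinearMap.det_toLin', det_mul,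
    det_nonsing_inv, ← det_one_sub_smul_mul_diagonal_eq_det_one_add hA, Ring.inverse_eq_inv',
    inv_mul_eq_div]
  rfl
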